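/- Let χ ⊂ ℝ^N be a simplex, ξ a proper face of χ, and ζ the face of χ opposite ξ. Define new vertices v' = v for v a vertex of ξ and v' = 2v − χ̂ for v a vertex of ζ, where χ̂ is the barycenter of χ. Then the points v' are geometrically independent, and the simplex χ' they span satisfies: ξ is a face of χ', ζ ⊂ Int χ', and χ ⊂ χ'. -/
import Mathlib


/-- The simplicial interior of the simplex spanned by `v 0, …, v m`. -/
def simplexInterior {E : Type*} [AddCommGroup E] [Module ℝ E] {m : ℕ}
    (v : Fin (m + 1) → E) : Set E :=
  {y | ∃ β : Fin (m + 1) → ℝ, (∀ i, 0 < β i) ∧ (∑ i, β i) = 1 ∧ y = ∑ i, β i • v i}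

theorem simplexInterior_convex {E : Type*} [AddCommGroup E] [Module ℝ E] {m : ℕ}
    (v : Fin (m + 1) → E) : Convex ℝ (simplexInterior v) := by
  rintro x ⟨β₁, h₁, s₁, rfl⟩ y ⟨β₂, h₂, s₂, rfl⟩ a b ha hb hab
  refine ⟨fun i => a * β₁ i + b * β₂ i, fun i => ?_, ?_, ?_⟩
  · show 0 < a * β₁ i + b * β₂ i
    rcases ha.lt_or_eq with h | h
    · have h1 := mul_pos h (h₁ i)
      have h2 := mul_nonneg hb (h₂ i).le
      linarith
    · have hb1 : b = 1 := by linarith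
      rw [← h, hb1]
      simpa using h₂ i
  · rw [Finset.sum_add_distrib, ← Finset.mul_sum, ← Finset.mul_sum, s₁, s₂]; linarith
  · rw [Finset.smul_sum, Finset.smul_sum, ← Finset.sum_add_distrib]
    exact Finset.sum_congr rfl fun i _ => by rw [smul_smul, smul_smul, add_smul]

theorem simplexInterior_subset_convexHull {E : Type*} [AddCommGroup E] [Module ℝ E] {m : ℕ}
    (v : Fin (m + 1) → E) : simplexInterior v ⊆ convexHull ℝ (Set.range v) := by
  rintro x ⟨β, hpos, hsum, rfl⟩
  rw [← Finset.centerMass_eq_of_sum_1 _ v hsum]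
  exact Finset.centerMass_mem_convexHull _ (fun i _ => (hpos i).le)
    (by rw [hsum]; norm_num) (fun i _ => Set.mem_range_self i)

open Classical in
/-- let `χ` be the simplex spanned by `v 0, …, v m`, `ξ` the proper face
spanned by the vertices in `S` (so `ζ`, the opposite face, is spanned by `Sᶜ`).  Put
`v' = v` on `S` and `v' = 2v − χ̂` off `S`, where `χ̂` is the barycenter of `χ`.  Then the
`v'` are geometrically (affinely) independent, `ξ` is (still) the face of `χ'` spanned by
the `v'` with indices in `S`, `ζ ⊂ Int χ'`, and `χ ⊂ χ'`. -/
theorem stmt_17 {N m : ℕ} (v : Fin (m + 1) → EuclideanSpace ℝ (Fin N))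
    (hv : AffineIndependent ℝ v)
    (S : Set (Fin (m + 1))) (hSne : S.Nonempty) (hSprop : S ≠ Set.univ) :
    let χhat : EuclideanSpace ℝ (Fin N) := ((m : ℝ) + 1)⁻¹ • ∑ j, v j
    let v' : Fin (m + 1) → EuclideanSpace ℝ (Fin N) :=
      fun idx => if idx ∈ S then v idx else (2 : ℝ) • v idx - χhat
    AffineIndependent ℝ v' ∧
    convexHull ℝ (v '' S) = convexHull ℝ (v' '' S) ∧
    convexHull ℝ (v '' Sᶜ) ⊆ simplexInterior v' ∧
    convexHull ℝ (Set.range v) ⊆ convexHull ℝ (Set.range v') := by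
  intro χhat v'
  classical
  have hm : ((m : ℝ) + 1) ≠ 0 := by positivity
  set c₀ : ℝ := ((m : ℝ) + 1)⁻¹ with hc₀
  have hχ : χhat = c₀ • ∑ j, v j := rfl
  have hv'def : ∀ i, v' i = if i ∈ S then v i else (2 : ℝ) • v i - χhat := fun _ => rfl
  have hv'S : ∀ i ∈ S, v' i = v i := fun i hi => by rw [hv'def, if_pos hi]
  -- the key linear-algebra computation: express combinations of `v'` in terms of `v`
  have key : ∀ β : Fin (m + 1) → ℝ, ∑ i, β i • v' i
      = ∑ j, ((if j ∈ S then β j else 2 * β j)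
          - c₀ * (∑ i, if i ∈ S then (0 : ℝ) else β i)) • v j := by
    intro β
    have h1 : ∀ i, β i • v' i
        = (if i ∈ S then β i else 2 * β i) • v i - (if i ∈ S then (0 : ℝ) else β i) • χhat := by
      intro i
      by_cases hi : i ∈ S
      · rw [hv'def, if_pos hi, if_pos hi, if_pos hi, zero_smul, sub_zero]
      · rw [hv'def, if_neg hi, if_neg hi, if_neg hi, smul_sub, smul_smul, mul_comm]
    rw [Finset.sum_congr rfl fun i _ => h1 i, Finset.sum_sub_distrib, ← Finset.sum_smul, hχ,
      smul_smul, Finset.smul_sum, ← Finset.sum_sub_distrib]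
    refine Finset.sum_congr rfl fun j _ => ?_
    module
  set SF := Finset.univ.filter (fun i : Fin (m + 1) => i ∈ S) with hSF
  set CF := Finset.univ.filter (fun i : Fin (m + 1) => i ∉ S) with hCF
  have hsum_ite : ∀ a b : ℝ,
      (∑ i : Fin (m + 1), if i ∈ S then a else b) = SF.card * a + CF.card * b := by
    intro a b
    rw [Finset.sum_ite, Finset.sum_const, Finset.sum_const, nsmul_eq_mul, nsmul_eq_mul]
  have hcard : (SF.card : ℝ) + CF.card = (m : ℝ) + 1 := by
    have h := Finset.card_filter_add_card_filter_not
      (s := (Finset.univ : Finset (Fin (m + 1)))) (p := fun i => i ∈ S)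
    rw [Finset.card_univ, Fintype.card_fin] at h
    exact_mod_cast h
  have hCFle : (CF.card : ℝ) ≤ (m : ℝ) + 1 := by
    have h := Finset.card_filter_le (Finset.univ : Finset (Fin (m + 1))) (fun i => i ∉ S)
    rw [Finset.card_univ, Fintype.card_fin] at h
    exact_mod_cast h
  set D : ℝ := 2 * ((m : ℝ) + 1) - CF.card with hD
  have hDpos : 0 < D := by rw [hD]; linarith
  set c : ℝ := D⁻¹ with hc
  have hcD : c * D = 1 := inv_mul_cancel₀ hDpos.ne'
  have hcpos : 0 < c := inv_pos.mpr hDpos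
  have hmc : ((m : ℝ) + 1) * c₀ = 1 := mul_inv_cancel₀ hm
  -- `c₀ * (CF * c / 2 + 1/2) = c`
  have hcc : c₀ * ((CF.card : ℝ) * (c / 2) + 1 / 2) = c := by
    have h2 : ((m : ℝ) + 1) * (c₀ * ((CF.card : ℝ) * (c / 2) + 1 / 2))
        = ((m : ℝ) + 1) * c := by
      rw [← mul_assoc, hmc, one_mul]
      linear_combination (-(1 : ℝ) / 2) * hcD + (c / 2) * hD
    exact mul_left_cancel₀ hm h2
  -- each vertex of the opposite face lies in the open simplex on `v'`
  have hmem : ∀ j₀, j₀ ∉ S → v j₀ ∈ simplexInterior v' := by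
    intro j₀ hj₀
    refine ⟨fun i => (if i ∈ S then c else c / 2) + (if i = j₀ then 1 / 2 else 0),
      fun i => ?_, ?_, ?_⟩
    · by_cases hi : i ∈ S <;> by_cases hij : i = j₀ <;>
        simp [hi, hij] <;> positivity
    · rw [Finset.sum_add_distrib, hsum_ite, Finset.sum_ite_eq' Finset.univ j₀
        (fun _ => (1 : ℝ) / 2), if_pos (Finset.mem_univ j₀)]
      linear_combination c * hcard + hcD / 2 - (c / 2) * hD
    · rw [key]
      have hT : (∑ i, if i ∈ S then (0 : ℝ)
          else ((if i ∈ S then c else c / 2) + (if i = j₀ then 1 / 2 else 0)))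
          = (CF.card : ℝ) * (c / 2) + 1 / 2 := by
        have e : ∀ i : Fin (m + 1), (if i ∈ S then (0 : ℝ)
            else ((if i ∈ S then c else c / 2) + (if i = j₀ then 1 / 2 else 0)))
            = (if i ∈ S then 0 else c / 2) + (if i = j₀ then 1 / 2 else 0) := by
          intro i
          by_cases hi : i ∈ S
          · have hij : i ≠ j₀ := fun h => hj₀ (h ▸ hi)
            simp [hi, hij]
          · simp [hi]
        rw [Finset.sum_congr rfl fun i _ => e i, Finset.sum_add_distrib, hsum_ite,
          Finset.sum_ite_eq' Finset.univ j₀ (fun _ => (1 : ℝ) / 2),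
          if_pos (Finset.mem_univ j₀)]
        ring
      rw [hT]
      have hcoef : ∀ j : Fin (m + 1),
          ((if j ∈ S then ((if j ∈ S then c else c / 2) + (if j = j₀ then 1 / 2 else 0))
            else 2 * ((if j ∈ S then c else c / 2) + (if j = j₀ then 1 / 2 else 0)))
            - c₀ * ((CF.card : ℝ) * (c / 2) + 1 / 2))
          = if j = j₀ then (1 : ℝ) else 0 := by
        intro j
        by_cases hj : j ∈ S
        · have hjj : j ≠ j₀ := fun h => hj₀ (h ▸ hj)
          rw [if_pos hj, if_pos hj, if_neg hjj, if_neg hjj, hcc]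
          ring
        · by_cases hjj : j = j₀
          · rw [if_neg hj, if_neg hj, if_pos hjj, if_pos hjj, hcc]
            ring
          · rw [if_neg hj, if_neg hj, if_neg hjj, if_neg hjj, hcc]
            ring
      rw [Finset.sum_congr rfl fun j _ => by rw [hcoef j]]
      simp [ite_smul]
  -- affine independence of `v'`
  have haff : AffineIndependent ℝ v' := by
    rw [affineIndependent_iff_of_fintype]
    intro w hw0 hws
    rw [Finset.weightedVSub_eq_linear_combination _ hw0, key w] at hws
    set T : ℝ := ∑ i, if i ∈ S then (0 : ℝ) else w i with hTdef
    have hsum' : ∑ j, ((if j ∈ S then w j else 2 * w j) - c₀ * T) = 0 := by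
      have e1 : ∀ j : Fin (m + 1),
          (if j ∈ S then w j else 2 * w j) = w j + (if j ∈ S then 0 else w j) := by
        intro j; by_cases hj : j ∈ S <;> simp [hj] <;> ring
      rw [Finset.sum_sub_distrib, Finset.sum_congr rfl fun j _ => e1 j,
        Finset.sum_add_distrib, hw0, Finset.sum_const, Finset.card_univ, Fintype.card_fin,
        nsmul_eq_mul]
      push_cast
      linear_combination (-T) * hmc
    have hz : ∀ j, ((if j ∈ S then w j else 2 * w j) - c₀ * T) = 0 := by
      refine (affineIndependent_iff_of_fintype (k := ℝ) (p := v)).mp hv _ hsum' ?_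
      rw [Finset.weightedVSub_eq_linear_combination _ hsum']
      exact hws
    have hT0 : T = 0 := by
      have hTc : T = (CF.card : ℝ) * (c₀ * T / 2) := by
        have e2 : ∀ j : Fin (m + 1),
            (if j ∈ S then (0 : ℝ) else w j) = if j ∈ S then (0 : ℝ) else c₀ * T / 2 := by
          intro j
          by_cases hj : j ∈ S
          · simp [hj]
          · have := hz j
            rw [if_neg hj] at this
            rw [if_neg hj, if_neg hj]
            linarith
        calc T = ∑ i, if i ∈ S then (0 : ℝ) else w i := hTdef
          _ = ∑ i, if i ∈ S then (0 : ℝ) else c₀ * T / 2 :=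
              Finset.sum_congr rfl fun i _ => e2 i
          _ = (CF.card : ℝ) * (c₀ * T / 2) := by rw [hsum_ite]; ring
      have h4 : T * (1 - (CF.card : ℝ) * c₀ / 2) = 0 := by linear_combination hTc
      have h5 : (CF.card : ℝ) * c₀ ≤ 1 := by
        have hc₀pos : 0 < c₀ := by rw [hc₀]; positivity
        calc (CF.card : ℝ) * c₀ ≤ ((m : ℝ) + 1) * c₀ := by nlinarith
          _ = 1 := hmc
      rcases mul_eq_zero.mp h4 with h | h
      · exact h
      · exfalso; linarith
    intro i
    have := hz i
    rw [hT0, mul_zero, sub_zero] at this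
    by_cases hi : i ∈ S
    · rwa [if_pos hi] at this
    · rw [if_neg hi] at this; linarith
  have h3 : convexHull ℝ (v '' Sᶜ) ⊆ simplexInterior v' := by
    refine convexHull_min ?_ (simplexInterior_convex v')
    rintro x ⟨j₀, hj₀, rfl⟩
    exact hmem j₀ hj₀
  refine ⟨haff, ?_, h3, ?_⟩
  · rw [Set.image_congr fun a ha => (hv'S a ha).symm]
  · refine convexHull_min ?_ (convex_convexHull ℝ _)
    rintro x ⟨j, rfl⟩
    by_cases hj : j ∈ S
    · rw [← hv'S j hj]
      exact subset_convexHull ℝ _ (Set.mem_range_self j)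
    · exact simplexInterior_subset_convexHull v' (hmem j hj)
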